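/- arXiv:2504.13552 — 3 statements merged into one kernel-verified Lean document; each statement's English description precedes it below -/
import Mathlib

section
/- Let h(s) = (2s+1)(3-s)/(8(s+1)) for s > 0. If 0 < r_max ≤ 3/2, then for all s with 0 < s ≤ r_max, h(s) ≥ r_max/(2(r_max+1)). -/
theorem stmt0 (rmax : ℝ) (h0 : 0 < rmax) (h1 : rmax ≤ 3/2) :
    ∀ s : ℝ, 0 < s → s ≤ rmax →
      (2*s+1)*(3-s)/(8*(s+1)) ≥ rmax/(2*(rmax+1)) := by
  intro s hs hsr
  rw [ge_iff_le, div_le_div_iff₀ (by linarith) (by linarith)]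
  nlinarith [sq_nonneg (s - rmax), sq_nonneg s, mul_pos hs h0, sq_nonneg (s*rmax)]
end

section
/- Let g(r) = (2+4r-r²)/(1+r) for r > 0. If 0 < r_max ≤ (3+√17)/2, then for all r with 0 < r ≤ r_max, g(r) ≥ r_max/(1+r_max). -/
theorem stmt2 (rmax : ℝ) (h0 : 0 < rmax) (h1 : rmax ≤ (3 + Real.sqrt 17)/2) :
    ∀ r : ℝ, 0 < r → r ≤ rmax →
      (2 + 4*r - r^2)/(1+r) ≥ rmax/(1+rmax) := by
  have hs : Real.sqrt 17 ^ 2 = 17 := Real.sq_sqrt (by norm_num)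
  have hs0 : 0 ≤ Real.sqrt 17 := Real.sqrt_nonneg 17
  have hkey : rmax^2 - 3*rmax - 2 ≤ 0 := by nlinarith [sq_nonneg (2*rmax - 3 - Real.sqrt 17)]
  intro r hr hrm
  rw [ge_iff_le, div_le_div_iff₀ (by linarith) (by linarith)]
  nlinarith [mul_nonneg (sub_nonneg.2 hrm) hr.le, mul_nonneg (mul_nonneg (sub_nonneg.2 hrm) hr.le) h0.le, mul_nonneg (sub_nonneg.2 hrm) h0.le]
end

section
/- Let E : ℝ^N → ℝ be convex and differentiable, ρ : ℝ^N → (0,∞) componentwise positive weights, τ > 0, r > 0, and let x^{n+1} minimize J(x) = ((1+2r)/(2τ(1+r)))·Σᵢ ρᵢ (xᵢ - x̂ᵢ)² + E(x) + (τ/2)·Q(x - xⁿ) over ℝ^N, where Q is a positive semidefinite quadratic form and x̂ = ((1+r)²/(1+2r))·xⁿ - (r²/(1+2r))·x^{n-1}. If additionally 0 < r ≤ r_max ≤ (3+√17)/2 with r = τ_{n+1}/τ_n, then E(x^{n+1}) + (r_max/(2τ_{n+1}(1+r_max)))·Σᵢ ρᵢ (x^{n+1}ᵢ - xⁿᵢ)²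 ≤ E(xⁿ) + (r_max/(2τ_n(1+r_max)))·Σᵢ ρᵢ (xⁿᵢ - x^{n-1}ᵢ)². -/
/-!
Testing the minimality of `x¹` against the points `x¹ + θ (xⁿ - x¹)`, `0 < θ ≤ 1`, and using
convexity of `E` gives, as `θ → 0`, the variational inequality
`E x¹ ≤ E xⁿ - 2 C ∑ ρᵢ (x¹ᵢ - x̂ᵢ)(x¹ᵢ - xⁿᵢ)`; the `Q`-term only helps, since `Q((1-θ) v) ≤ Q(v)`.
As `x¹ - x̂ = (x¹ - xⁿ) - r²/(1+2r) (xⁿ - xᵐ)`, the dissipation estimate then reduces, coordinate by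
coordinate, to the nonnegativity of a binary quadratic form in `(x¹ᵢ - xⁿᵢ, xⁿᵢ - xᵐᵢ)`. Its
discriminant condition is `r³(1+R)² ≤ R(1+r)(2+4r+R+3rR)`, which holds for `0 < r ≤ R` as soon as
`R² ≤ 3R + 2`, i.e. `R ≤ (3 + √17)/2`.
-/

open Matrix Set Filter Topology Finset

theorem ConvexOn.le_add_of_isMinOn_add {V : Type*} [AddCommGroup V] [Module ℝ V]
    {s : Set V} {f Φ : V → ℝ} (hf : ConvexOn ℝ s f) {x y : V} (hx : x ∈ s) (hy : y ∈ s)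
    (hmin : IsMinOn (f + Φ) s x) {a b : ℝ}
    (hΦ : ∀ θ ∈ Ioc (0 : ℝ) 1, Φ (x + θ • (y - x)) ≤ Φ x + θ * a + θ ^ 2 * b) :
    f x ≤ f y + a := by
  have hsegment : ∀ θ ∈ Ioc (0 : ℝ) 1, f x ≤ f y + a + θ * b := by
    rintro θ ⟨hθ0, hθ1⟩
    have hxθ : x + θ • (y - x) = (1 - θ) • x + θ • y := by module
    have hconv : f (x + θ • (y - x)) ≤ (1 - θ) * f x + θ * f y := by
      rw [hxθ]
      exact hf.2 hx hy (by linarith) hθ0.le (by ring)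
    have hle : f x + Φ x ≤ f (x + θ • (y - x)) + Φ (x + θ • (y - x)) :=
      hmin (hxθ ▸ hf.1 hx hy (by linarith) hθ0.le (by ring))
    have : θ * f x ≤ θ * (f y + a + θ * b) := by nlinarith [hΦ θ ⟨hθ0, hθ1⟩]
    exact le_of_mul_le_mul_left this hθ0
  have hlim : Tendsto (fun θ : ℝ => f y + a + θ * b) (𝓝[>] 0) (𝓝 (f y + a)) := by
    have : Tendsto (fun θ : ℝ => f y + a + θ * b) (𝓝 0) (𝓝 (f y + a + 0 * b)) :=
      Continuous.tendsto (by fun_prop) 0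
    simpa using this.mono_left nhdsWithin_le_nhds
  exact ge_of_tendsto hlim (eventually_of_mem (Ioc_mem_nhdsGT one_pos) hsegment)

theorem sum_mul_sq_add_smul_sub {ι : Type*} [Fintype ι] (ρ c x y : ι → ℝ) (θ : ℝ) :
    ∑ i, ρ i * ((x + θ • (y - x)) i - c i) ^ 2 =
      ∑ i, ρ i * (x i - c i) ^ 2 + θ * (2 * ∑ i, ρ i * ((x i - c i) * (y i - x i))) +
        θ ^ 2 * ∑ i, ρ i * (y i - x i) ^ 2 := by
  simp only [mul_sum, ← sum_add_distrib]
  refine sum_congr rfl fun i _ => ?_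
  simp only [Pi.add_apply, Pi.smul_apply, Pi.sub_apply, smul_eq_mul]
  ring

theorem Matrix.PosSemidef.dotProduct_mulVec_smul_le {n : Type*} [Fintype n]
    {A : Matrix n n ℝ} (hA : A.PosSemidef) (v : n → ℝ) {c : ℝ} (hc : |c| ≤ 1) :
    (c • v) ⬝ᵥ A *ᵥ (c • v) ≤ v ⬝ᵥ A *ᵥ v := by
  have hv : 0 ≤ v ⬝ᵥ A *ᵥ v := by simpa using hA.dotProduct_mulVec_nonneg v
  have hc2 : c ^ 2 ≤ 1 := by nlinarith [sq_abs c, abs_nonneg c]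
  rw [mulVec_smul, dotProduct_smul, smul_dotProduct, smul_eq_mul, smul_eq_mul, ← mul_assoc,
    ← sq]
  nlinarith

theorem quadratic_nonneg_of_sq_le_mul {P B α : ℝ} (hP : 0 < P) (hD : B ^ 2 ≤ P * α) (t u : ℝ) :
    0 ≤ P * t ^ 2 - 2 * B * t * u + α * u ^ 2 := by
  nlinarith [sq_nonneg (P * t - B * u), mul_nonneg (sub_nonneg.2 hD) (sq_nonneg u)]

theorem bdf2_discriminant {r R : ℝ} (hr : 0 < r) (hrR : r ≤ R) (hR : R ^ 2 ≤ 3 * R + 2) :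
    (r ^ 2 * (1 + R)) ^ 2 ≤ (2 + 4 * r + R + 3 * r * R) * (r * R * (1 + r)) := by
  have hR0 : 0 < R := hr.trans_le hrR
  have h1 : 0 ≤ (R - r) * (2 + R + 4 * r + 5 * r * R + 3 * r ^ 2 + 5 * r ^ 2 * R) :=
    mul_nonneg (by linarith) (by positivity)
  have h2 : 0 ≤ r * (1 + r) ^ 2 * (3 * R + 2 - R ^ 2) := mul_nonneg (by positivity) (by linarith)
  have : r ^ 3 * (1 + R) ^ 2 ≤ R * (1 + r) * (2 + 4 * r + R + 3 * r * R) := by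
    linear_combination h1 + h2
  nlinarith

theorem bdf2_dissipation_pointwise {τ r R : ℝ} (hτ : 0 < τ) (hr : 0 < r) (hrR : r ≤ R)
    (hR : R ^ 2 ≤ 3 * R + 2) (t u : ℝ) :
    (1 + 2 * r) / (2 * τ * (1 + r)) * (2 * ((t - r ^ 2 / (1 + 2 * r) * u) * -t)) +
        R / (2 * τ * (1 + R)) * t ^ 2 ≤ r * R / (2 * τ * (1 + R)) * u ^ 2 := by
  have hR0 : 0 < R := hr.trans_le hrR
  have hquad := quadratic_nonneg_of_sq_le_mul (by positivity) (bdf2_discriminant hr hrR hR) t u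
  have hdiff : r * R / (2 * τ * (1 + R)) * u ^ 2 -
      ((1 + 2 * r) / (2 * τ * (1 + r)) * (2 * ((t - r ^ 2 / (1 + 2 * r) * u) * -t)) +
        R / (2 * τ * (1 + R)) * t ^ 2) =
      ((2 + 4 * r + R + 3 * r * R) * t ^ 2 - 2 * (r ^ 2 * (1 + R)) * t * u +
        r * R * (1 + r) * u ^ 2) / (2 * τ * (1 + r) * (1 + R)) := by
    field_simp
    ring
  rw [← sub_nonneg, hdiff]
  exact div_nonneg hquad (by positivity)

theorem bdf2_dissipation_sum_le {ι : Type*} [Fintype ι] {ρ : ι → ℝ} (hρ : ∀ i, 0 ≤ ρ i)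
    {τ r R : ℝ} (hτ : 0 < τ) (hr : 0 < r) (hrR : r ≤ R) (hR : R ^ 2 ≤ 3 * R + 2)
    (x₀ x₁ x₂ : ι → ℝ) :
    (1 + 2 * r) / (2 * τ * (1 + r)) * (2 * ∑ i, ρ i *
        ((x₂ i - ((1 + r) ^ 2 / (1 + 2 * r) * x₁ i - r ^ 2 / (1 + 2 * r) * x₀ i)) * (x₁ i - x₂ i))) +
        R / (2 * τ * (1 + R)) * ∑ i, ρ i * (x₂ i - x₁ i) ^ 2 ≤
      r * R / (2 * τ * (1 + R)) * ∑ i, ρ i * (x₁ i - x₀ i) ^ 2 := by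
  have h2r : 1 + 2 * r ≠ 0 := by positivity
  simp only [mul_sum, ← sum_add_distrib]
  refine sum_le_sum fun i _ => ?_
  have hxhat : x₂ i - ((1 + r) ^ 2 / (1 + 2 * r) * x₁ i - r ^ 2 / (1 + 2 * r) * x₀ i) =
      (x₂ i - x₁ i) - r ^ 2 / (1 + 2 * r) * (x₁ i - x₀ i) := by
    field_simp
    ring
  have h := mul_le_mul_of_nonneg_left
    (bdf2_dissipation_pointwise hτ hr hrR hR (x₂ i - x₁ i) (x₁ i - x₀ i)) (hρ i)
  rw [hxhat]
  linarith

theorem ConvexOn.le_add_of_minimizes_weighted_proximal {ι : Type*} [Fintype ι]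
    {E : (ι → ℝ) → ℝ} (hE : ConvexOn ℝ univ E) {ρ c x₀ x : ι → ℝ} {A : Matrix ι ι ℝ}
    (hA : A.PosSemidef) {C κ : ℝ} (hκ : 0 ≤ κ)
    (hmin : ∀ y, C * ∑ i, ρ i * (x i - c i) ^ 2 + E x + κ * ((x - x₀) ⬝ᵥ A *ᵥ (x - x₀)) ≤
      C * ∑ i, ρ i * (y i - c i) ^ 2 + E y + κ * ((y - x₀) ⬝ᵥ A *ᵥ (y - x₀))) :
    E x ≤ E x₀ + C * (2 * ∑ i, ρ i * ((x i - c i) * (x₀ i - x i))) := by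
  refine hE.le_add_of_isMinOn_add (mem_univ _) (mem_univ _)
    (Φ := fun y => C * ∑ i, ρ i * (y i - c i) ^ 2 + κ * ((y - x₀) ⬝ᵥ A *ᵥ (y - x₀)))
    (b := C * ∑ i, ρ i * (x₀ i - x i) ^ 2)
    (isMinOn_univ_iff.2 fun y => ?_) fun θ hθ => ?_
  · have := hmin y
    simp only [Pi.add_apply]
    linarith
  · have hseg : x + θ • (x₀ - x) - x₀ = (1 - θ) • (x - x₀) := by module
    have hQ := hA.dotProduct_mulVec_smul_le (x - x₀)
      (abs_le.2 ⟨by linarith [hθ.2], by linarith [hθ.1]⟩ : |1 - θ| ≤ 1)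
    simp only [sum_mul_sq_add_smul_sub, hseg]
    nlinarith [mul_le_mul_of_nonneg_left hQ hκ]

theorem sq_le_three_mul_add_two {R : ℝ} (hR0 : 0 ≤ R) (hR : R ≤ (3 + Real.sqrt 17) / 2) :
    R ^ 2 ≤ 3 * R + 2 := by
  have h17 : Real.sqrt 17 ^ 2 = 17 := Real.sq_sqrt (by norm_num)
  have h4 : 4 ≤ Real.sqrt 17 := Real.le_sqrt_of_sq_le (by norm_num)
  nlinarith [mul_nonneg (sub_nonneg.2 hR) (by linarith : 0 ≤ R - (3 - Real.sqrt 17) / 2)]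

theorem stmt18_general {N : ℕ} (E : (Fin N → ℝ) → ℝ)
    (hEconv : ConvexOn ℝ Set.univ E)
    (ρ : Fin N → ℝ) (hρ : ∀ i, 0 < ρ i)
    (A : Matrix (Fin N) (Fin N) ℝ) (hA : A.PosSemidef)
    (τn τn1 rmax : ℝ) (hτn : 0 < τn) (hτn1 : 0 < τn1)
    (hr : τn1 / τn ≤ rmax) (hrmax : rmax ≤ (3 + Real.sqrt 17)/2)
    (xm xn x1 : Fin N → ℝ)
    (hmin : ∀ y : Fin N → ℝ,
      (let r := τn1 / τn
       let xhat := fun i => ((1+r)^2/(1+2*r)) * xn i - (r^2/(1+2*r)) * xm i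
       let J := fun x : Fin N → ℝ =>
         ((1+2*r)/(2*τn1*(1+r))) * ∑ i, ρ i * (x i - xhat i)^2 + E x +
           (τn1/2) * ((x - xn) ⬝ᵥ A.mulVec (x - xn))
       J x1 ≤ J y)) :
    E x1 + (rmax/(2*τn1*(1+rmax))) * ∑ i, ρ i * (x1 i - xn i)^2 ≤
      E xn + (rmax/(2*τn*(1+rmax))) * ∑ i, ρ i * (xn i - xm i)^2 := by
  set r := τn1 / τn with hr_def
  have hr0 : 0 < r := div_pos hτn1 hτn
  have hvar := hEconv.le_add_of_minimizes_weighted_proximal hA (by positivity) hmin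
  have hsum := bdf2_dissipation_sum_le (fun i => (hρ i).le) hτn1 hr0 hr
    (sq_le_three_mul_add_two (hr0.le.trans hr) hrmax) xm xn x1
  have hcoeff : rmax / (2 * τn * (1 + rmax)) = r * rmax / (2 * τn1 * (1 + rmax)) := by
    rw [hr_def]
    field_simp
  rw [hcoeff]
  linarith

theorem stmt18 {N : ℕ} (E : (Fin N → ℝ) → ℝ)
    (hEconv : ConvexOn ℝ Set.univ E) (hEdiff : Differentiable ℝ E)
    (ρ : Fin N → ℝ) (hρ : ∀ i, 0 < ρ i)
    (A : Matrix (Fin N) (Fin N) ℝ) (hA : A.PosSemidef)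
    (τn τn1 rmax : ℝ) (hτn : 0 < τn) (hτn1 : 0 < τn1)
    (hr : τn1 / τn ≤ rmax) (hrmax : rmax ≤ (3 + Real.sqrt 17)/2)
    (xm xn x1 : Fin N → ℝ)
    (hmin : ∀ y : Fin N → ℝ,
      (let r := τn1 / τn
       let xhat := fun i => ((1+r)^2/(1+2*r)) * xn i - (r^2/(1+2*r)) * xm i
       let J := fun x : Fin N → ℝ =>
         ((1+2*r)/(2*τn1*(1+r))) * ∑ i, ρ i * (x i - xhat i)^2 + E x +
           (τn1/2) * ((x - xn) ⬝ᵥ A.mulVec (x - xn))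
       J x1 ≤ J y)) :
    E x1 + (rmax/(2*τn1*(1+rmax))) * ∑ i, ρ i * (x1 i - xn i)^2 ≤
      E xn + (rmax/(2*τn*(1+rmax))) * ∑ i, ρ i * (xn i - xm i)^2 :=
  stmt18_general E hEconv ρ hρ A hA τn τn1 rmax hτn hτn1 hr hrmax xm xn x1 hmin
end
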